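/- arXiv:2404.19118 — 2 statements merged into one kernel-verified Lean document; each statement's English description precedes it below -/
import Mathlib

section
/- Identification of the marginal counterfactual mean under treatment k over the entire trial population via the extrapolation assumption (treated-arm part of Theorem 2): under assumptions (P-k-all), (I-k-all), (C-k-all) and (Extra), one has 𝔼[Yᵏ] = Σ_{(w,e): 𝒫(W=w,E=e)>0} μ_oc(k,w,e) · p(w,e), where μ_oc(k,w,e) := 𝔼[Y | A=k, W=w, E=e, V=1]. -/
/-!
Split `𝔼[Yᵏ]` over the finitely many cells `{W = w, E = e}`. Null cells contribute nothing; on a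
cell of positive mass, (P-k-all) makes the treated cells positive as well, so (I-k-all), (C-k-all)
and (Extra) move `𝔼[Yᵏ | W = w, E = e]` step by step to `μ_oc(k, w, e)`.
-/

open MeasureTheory Finset

/-- Conditional expectation given an event: `𝔼[X | B] := 𝔼[X · 1_B] / 𝒫(B)`. -/
noncomputable def condMean {Ω : Type*} [MeasurableSpace Ω] (P : Measure Ω)
    (X : Ω → ℝ) (B : Set Ω) : ℝ :=
  (∫ ω, B.indicator X ω ∂P) / (P B).toReal

theorem integral_eq_sum_integral_indicator_fiber {Ω α E : Type*} [MeasurableSpace Ω]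
    {P : Measure Ω} [Fintype α] [MeasurableSpace α] [MeasurableSingletonClass α]
    [NormedAddCommGroup E] [NormedSpace ℝ E] {f : Ω → α} (hf : Measurable f) {X : Ω → E}
    (hX : Integrable X P) :
    ∫ ω, X ω ∂P = ∑ a, ∫ ω, (f ⁻¹' {a}).indicator X ω ∂P := by
  classical
  rw [← integral_finsetSum _ fun a _ => hX.indicator (hf (measurableSet_singleton a))]
  congr 1 with ω
  simp only [Set.indicator_apply, Set.mem_preimage, Set.mem_singleton_iff]
  rw [Fintype.sum_ite_eq]

theorem integral_indicator_of_measure_eq_zero {Ω E : Type*} [MeasurableSpace Ω]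
    {P : Measure Ω} [NormedAddCommGroup E] [NormedSpace ℝ E] (X : Ω → E) {B : Set Ω}
    (hB : P B = 0) : ∫ ω, B.indicator X ω ∂P = 0 := by
  rw [integral_indicator₀ (.of_null hB), Measure.restrict_eq_zero.2 hB, integral_zero_measure]

theorem condMean_mul_measure_toReal {Ω : Type*} [MeasurableSpace Ω] {P : Measure Ω}
    [IsFiniteMeasure P] (X : Ω → ℝ) {B : Set Ω} (hB : P B ≠ 0) :
    condMean P X B * (P B).toReal = ∫ ω, B.indicator X ω ∂P :=
  div_mul_cancel₀ _ (ENNReal.toReal_ne_zero.2 ⟨hB, measure_ne_top P B⟩)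

theorem integral_indicator_eq_condMean_mul {Ω : Type*} [MeasurableSpace Ω] (P : Measure Ω)
    [IsFiniteMeasure P] (X : Ω → ℝ) (B : Set Ω) :
    ∫ ω, B.indicator X ω ∂P = if 0 < P B then condMean P X B * (P B).toReal else 0 := by
  split_ifs with hB
  · exact (condMean_mul_measure_toReal X hB.ne').symm
  · exact integral_indicator_of_measure_eq_zero X (nonpos_iff_eq_zero.1 (not_lt.1 hB))

theorem marginal_mean_treated_identification_extrapolation_general
    {Ω : Type*} [MeasurableSpace Ω] (P : Measure Ω) [IsProbabilityMeasure P]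
    {𝓦 ℰ : Type*} [Fintype 𝓦] [Fintype ℰ]
    [MeasurableSpace 𝓦] [MeasurableSingletonClass 𝓦]
    [MeasurableSpace ℰ] [MeasurableSingletonClass ℰ]
    (W : Ω → 𝓦) (E : Ω → ℰ) (V : Ω → Fin 2) {K : ℕ} (A : Ω → Fin (K + 1))
    (k : Fin (K + 1)) (Y Yk : Ω → ℝ)
    (hW : Measurable W) (hE : Measurable E)
    (hYk : Integrable Yk P)
    -- (P-k-all) positivity for arm k among all units
    (hPkall : ∀ (w : 𝓦) (e : ℰ), 0 < P {ω | W ω = w ∧ E ω = e} →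
      0 < P {ω | A ω = k ∧ W ω = w ∧ E ω = e ∧ V ω = 1})
    -- (I-k-all) weak A-ignorability for arm k among all units
    (hIkall : ∀ (w : 𝓦) (e : ℰ), 0 < P {ω | A ω = k ∧ W ω = w ∧ E ω = e} →
      condMean P Yk {ω | W ω = w ∧ E ω = e} =
        condMean P Yk {ω | A ω = k ∧ W ω = w ∧ E ω = e})
    -- (C-k-all) consistency in mean for arm k among all units
    (hCkall : ∀ (w : 𝓦) (e : ℰ), 0 < P {ω | A ω = k ∧ W ω = w ∧ E ω = e} →
      condMean P Yk {ω | A ω = k ∧ W ω = w ∧ E ω = e} =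
        condMean P Y {ω | A ω = k ∧ W ω = w ∧ E ω = e})
    -- (Extra) extrapolation of outcome mechanism among the treated
    (hExtra : ∀ (w : 𝓦) (e : ℰ), 0 < P {ω | A ω = k ∧ W ω = w ∧ E ω = e ∧ V ω = 1} →
      condMean P Y {ω | A ω = k ∧ W ω = w ∧ E ω = e ∧ V ω = 1} =
        condMean P Y {ω | A ω = k ∧ W ω = w ∧ E ω = e})
    :
    ∫ ω, Yk ω ∂P =
      ∑ w : 𝓦, ∑ e : ℰ,
        if 0 < P {ω | W ω = w ∧ E ω = e} then
          condMean P Y {ω | A ω = k ∧ W ω = w ∧ E ω = e ∧ V ω = 1} *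
            (P {ω | W ω = w ∧ E ω = e}).toReal
        else 0 := by
  rw [integral_eq_sum_integral_indicator_fiber (hW.prodMk hE) hYk, Fintype.sum_prod_type]
  refine Fintype.sum_congr _ _ fun w => Fintype.sum_congr _ _ fun e => ?_
  simp only [Set.preimage, Set.mem_singleton_iff, Prod.mk.injEq]
  rw [integral_indicator_eq_condMean_mul]
  split_ifs with hpos
  · have hkV := hPkall w e hpos
    have hk : 0 < P {ω | A ω = k ∧ W ω = w ∧ E ω = e} :=
      hkV.trans_le (measure_mono fun ω h => ⟨h.1, h.2.1, h.2.2.1⟩)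
    rw [hIkall w e hk, hCkall w e hk, hExtra w e hkV]
  · rfl

/-- Identification of the marginal counterfactual mean under treatment `k` over the entire
trial population via the extrapolation assumption (treated-arm part of Theorem 2): under
(P-k-all), (I-k-all), (C-k-all) and (Extra),
`𝔼[Yᵏ] = Σ_{(w,e) : 𝒫(W=w,E=e)>0} μ_oc(k,w,e) · p(w,e)`,
where `μ_oc(k,w,e) := 𝔼[Y | A=k, W=w, E=e, V=1]`. -/
theorem marginal_mean_treated_identification_extrapolation
    {Ω : Type*} [MeasurableSpace Ω] (P : Measure Ω) [IsProbabilityMeasure P]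
    {𝓦 ℰ : Type*} [Fintype 𝓦] [Fintype ℰ] [Nonempty 𝓦] [Nonempty ℰ]
    [MeasurableSpace 𝓦] [MeasurableSingletonClass 𝓦]
    [MeasurableSpace ℰ] [MeasurableSingletonClass ℰ]
    (W : Ω → 𝓦) (E : Ω → ℰ) (V : Ω → Fin 2) {K : ℕ} (A : Ω → Fin (K + 1))
    (k : Fin (K + 1)) (Y Yk Y0 : Ω → ℝ)
    (hW : Measurable W) (hE : Measurable E) (hV : Measurable V) (hA : Measurable A)
    (hY : Integrable Y P) (hYk : Integrable Yk P) (hY0 : Integrable Y0 P)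
    -- (P-k-all) positivity for arm k among all units
    (hPkall : ∀ (w : 𝓦) (e : ℰ), 0 < P {ω | W ω = w ∧ E ω = e} →
      0 < P {ω | A ω = k ∧ W ω = w ∧ E ω = e ∧ V ω = 1})
    -- (I-k-all) weak A-ignorability for arm k among all units
    (hIkall : ∀ (w : 𝓦) (e : ℰ), 0 < P {ω | A ω = k ∧ W ω = w ∧ E ω = e} →
      condMean P Yk {ω | W ω = w ∧ E ω = e} =
        condMean P Yk {ω | A ω = k ∧ W ω = w ∧ E ω = e})
    -- (C-k-all) consistency in mean for arm k among all units
    (hCkall : ∀ (w : 𝓦) (e : ℰ), 0 < P {ω | A ω = k ∧ W ω = w ∧ E ω = e} →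
      condMean P Yk {ω | A ω = k ∧ W ω = w ∧ E ω = e} =
        condMean P Y {ω | A ω = k ∧ W ω = w ∧ E ω = e})
    -- (Extra) extrapolation of outcome mechanism among the treated
    (hExtra : ∀ (w : 𝓦) (e : ℰ), 0 < P {ω | A ω = k ∧ W ω = w ∧ E ω = e ∧ V ω = 1} →
      condMean P Y {ω | A ω = k ∧ W ω = w ∧ E ω = e ∧ V ω = 1} =
        condMean P Y {ω | A ω = k ∧ W ω = w ∧ E ω = e})
    :
    ∫ ω, Yk ω ∂P =
      ∑ w : 𝓦, ∑ e : ℰ,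
        if 0 < P {ω | W ω = w ∧ E ω = e} then
          condMean P Y {ω | A ω = k ∧ W ω = w ∧ E ω = e ∧ V ω = 1} *
            (P {ω | W ω = w ∧ E ω = e}).toReal
        else 0 :=
  marginal_mean_treated_identification_extrapolation_general P W E V A k Y Yk hW hE hYk hPkall
    hIkall hCkall hExtra
end

section
/- Population double robustness of the doubly robust functional with respect to the propensity model (robustness property of cATE_DR claimed in Section 5.3): let q : 𝒲 × ℰ → ℝ be an arbitrary function with 0 < q(w,e) < 1 for all (w,e) (a possibly misspecified propensity model) and let μ_oc be the true outcome regression among concurrent units. Then (1/𝒫(V=1)) · 𝔼[ 1{V=1} · ( (2A−1)/(A·q(W,E) + (1−A)·(1−q(W,E))) · (Y − μ_oc(A,W,E)) + μ_oc(1,W,E) − μ_oc(0,W,E) ) ] = Σ_{(w,e): 𝒫(W=w,E=e,V=1)>0} (μ_oc(1,w,e) − μ_oc(0,w,e)) · p(w,e|V=1). -/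
/-! On each cell `{A = a, W = w, E = e, V = 1}` the inverse-propensity weight
`(2A − 1)/(A q + (1 − A)(1 − q))` is a constant, whatever `q` is, while `μ_oc(a, w, e)` is the mean
of `Y` on that cell; so the augmentation term integrates to zero cell by cell. What is left is the
integral over `{V = 1}` of `μ_oc(1, W, E) − μ_oc(0, W, E)`, a function of `(W, E)` only, which is the
stated sum over the cells of `(W, E)`. -/

open MeasureTheory Finset

section CellDecomposition

variable {Ω κ : Type*} [MeasurableSpace Ω] {P : Measure Ω}

theorem setIntegral_eq_condMean_mul [IsFiniteMeasure P] {X : Ω → ℝ} {B : Set Ω}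
    (hB : MeasurableSet B) : ∫ ω in B, X ω ∂P = condMean P X B * P.real B := by
  rcases eq_or_ne (P B) 0 with hB0 | hB0
  · simp [setIntegral_measure_zero X hB0, measureReal_def, hB0]
  · have : P.real B ≠ 0 := (measureReal_ne_zero_iff (measure_ne_top P B)).mpr hB0
    rw [condMean, integral_indicator hB, ← measureReal_def, div_mul_cancel₀ _ this]

theorem setIntegral_sub_condMean [IsFiniteMeasure P] {X : Ω → ℝ} {B : Set Ω}
    (hB : MeasurableSet B) (hX : IntegrableOn X B P) :
    ∫ ω in B, (X ω - condMean P X B) ∂P = 0 := by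
  rw [integral_sub hX (integrableOn_const (measure_ne_top P B)), setIntegral_const,
    setIntegral_eq_condMean_mul hB, smul_eq_mul, mul_comm, sub_self]

variable [Fintype κ] [MeasurableSpace κ] [MeasurableSingletonClass κ] {K : Ω → κ}

theorem setIntegral_eq_sum_preimage_singleton {E : Type*} [NormedAddCommGroup E]
    [NormedSpace ℝ E] (hK : Measurable K) {B : Set Ω} (hB : MeasurableSet B) {f : Ω → E}
    (hf : ∀ k, IntegrableOn f (B ∩ K ⁻¹' {k}) P) :
    ∫ ω in B, f ω ∂P = ∑ k, ∫ ω in B ∩ K ⁻¹' {k}, f ω ∂P := by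
  have hcells : ⋃ k, B ∩ K ⁻¹' {k} = B := by
    rw [← Set.inter_iUnion, ← Set.preimage_iUnion, Set.iUnion_of_singleton,
      Set.preimage_univ, Set.inter_univ]
  conv_lhs => rw [← hcells]
  refine integral_iUnion_fintype (fun k => hB.inter (hK (measurableSet_singleton k)))
    (fun k l hkl => ?_) hf
  exact ((Set.disjoint_singleton.mpr hkl).preimage K).mono Set.inter_subset_right
    Set.inter_subset_right

theorem setIntegral_comp_eq_sum [IsFiniteMeasure P] (hK : Measurable K) {B : Set Ω}
    (hB : MeasurableSet B) (φ : κ → ℝ) :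
    ∫ ω in B, φ (K ω) ∂P = ∑ k, φ k * P.real (B ∩ K ⁻¹' {k}) := by
  have hcell : ∀ k, MeasurableSet (B ∩ K ⁻¹' {k}) :=
    fun k => hB.inter (hK (measurableSet_singleton k))
  have hconst : ∀ k, Set.EqOn (fun ω => φ (K ω)) (fun _ => φ k) (B ∩ K ⁻¹' {k}) :=
    fun k ω hω => congrArg φ hω.2
  rw [setIntegral_eq_sum_preimage_singleton hK hB fun k =>
    (integrableOn_const (measure_ne_top P _)).congr_fun (hconst k).symm (hcell k)]
  refine Finset.sum_congr rfl fun k _ => ?_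
  rw [setIntegral_congr_fun (hcell k) (hconst k), setIntegral_const, smul_eq_mul, mul_comm]

theorem setIntegral_mul_sub_condMean_add [IsFiniteMeasure P] (hK : Measurable K) {B : Set Ω}
    (hB : MeasurableSet B) {Y F : Ω → ℝ} (hY : IntegrableOn Y B P) (hF : IntegrableOn F B P)
    (g : κ → ℝ) :
    ∫ ω in B, (g (K ω) * (Y ω - condMean P Y (B ∩ K ⁻¹' {K ω})) + F ω) ∂P =
      ∫ ω in B, F ω ∂P := by
  have hcell : ∀ k, MeasurableSet (B ∩ K ⁻¹' {k}) :=
    fun k => hB.inter (hK (measurableSet_singleton k))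
  have hF' : ∀ k, IntegrableOn F (B ∩ K ⁻¹' {k}) P := fun k => hF.mono_set Set.inter_subset_left
  have hres : ∀ k, Set.EqOn
      (fun ω => g (K ω) * (Y ω - condMean P Y (B ∩ K ⁻¹' {K ω})) + F ω)
      (fun ω => g k * (Y ω - condMean P Y (B ∩ K ⁻¹' {k})) + F ω) (B ∩ K ⁻¹' {k}) := by
    intro k ω hω
    simp only [show K ω = k from hω.2]
  have hint : ∀ k, IntegrableOn (fun ω => g k * (Y ω - condMean P Y (B ∩ K ⁻¹' {k})))
      (B ∩ K ⁻¹' {k}) P := fun k =>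
    ((hY.mono_set Set.inter_subset_left).sub (integrableOn_const (measure_ne_top P _))).const_mul _
  rw [setIntegral_eq_sum_preimage_singleton hK hB fun k =>
      ((hint k).add (hF' k)).congr_fun (hres k).symm (hcell k),
    setIntegral_eq_sum_preimage_singleton hK hB hF']
  refine Finset.sum_congr rfl fun k _ => ?_
  rw [setIntegral_congr_fun (hcell k) (hres k), integral_add (hint k) (hF' k), integral_const_mul,
    setIntegral_sub_condMean (hcell k) (hY.mono_set Set.inter_subset_left), mul_zero, zero_add]

end CellDecomposition

theorem doubly_robust_wrt_propensity_model_general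
    {Ω : Type*} [MeasurableSpace Ω] (P : Measure Ω) [IsProbabilityMeasure P]
    {𝓦 ℰ : Type*} [Fintype 𝓦] [Fintype ℰ]
    [MeasurableSpace 𝓦] [MeasurableSingletonClass 𝓦]
    [MeasurableSpace ℰ] [MeasurableSingletonClass ℰ]
    (W : Ω → 𝓦) (E : Ω → ℰ) (V : Ω → Fin 2) (A : Ω → Fin 2) (Y : Ω → ℝ)
    (hW : Measurable W) (hE : Measurable E) (hV : Measurable V) (hA : Measurable A)
    (hY : Integrable Y P)
    -- the true outcome regression among concurrent units
    (μoc : Fin 2 → 𝓦 → ℰ → ℝ)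
    (hμoc : ∀ (a : Fin 2) (w : 𝓦) (e : ℰ), μoc a w e =
      condMean P Y {ω | A ω = a ∧ W ω = w ∧ E ω = e ∧ V ω = 1})
    -- an arbitrary, possibly misspecified, propensity model bounded in (0,1)
    (q : 𝓦 → ℰ → ℝ) :
    (1 / (P {ω | V ω = 1}).toReal) *
      ∫ ω, (if V ω = 1 then
          (2 * ((A ω : ℕ) : ℝ) - 1) /
              (((A ω : ℕ) : ℝ) * q (W ω) (E ω) +
                (1 - ((A ω : ℕ) : ℝ)) * (1 - q (W ω) (E ω))) *
              (Y ω - μoc (A ω) (W ω) (E ω)) +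
            μoc 1 (W ω) (E ω) - μoc 0 (W ω) (E ω)
        else 0) ∂P =
      ∑ w : 𝓦, ∑ e : ℰ,
        if 0 < P {ω | W ω = w ∧ E ω = e ∧ V ω = 1} then
          (μoc 1 w e - μoc 0 w e) *
            ((P {ω | W ω = w ∧ E ω = e ∧ V ω = 1}).toReal / (P {ω | V ω = 1}).toReal)
        else 0 := by
  set B : Set Ω := {ω | V ω = 1}
  set L : Ω → 𝓦 × ℰ := fun ω => (W ω, E ω)
  set K : Ω → Fin 2 × 𝓦 × ℰ := fun ω => (A ω, L ω)
  have hB : MeasurableSet B := hV (measurableSet_singleton 1)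
  have hL : Measurable L := hW.prodMk hE
  have hK : Measurable K := hA.prodMk hL
  have hcell : ∀ a w e, {ω | A ω = a ∧ W ω = w ∧ E ω = e ∧ V ω = 1} = B ∩ K ⁻¹' {(a, w, e)} :=
    fun a w e => Set.ext fun ω => by simp [B, K, L, and_comm, and_left_comm, and_assoc]
  have hslice : ∀ w e, {ω | W ω = w ∧ E ω = e ∧ V ω = 1} = B ∩ L ⁻¹' {(w, e)} :=
    fun w e => Set.ext fun ω => by simp [B, L, and_comm, and_assoc]
  let g : Fin 2 × 𝓦 × ℰ → ℝ := fun k =>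
    (2 * ((k.1 : ℕ) : ℝ) - 1) /
      (((k.1 : ℕ) : ℝ) * q k.2.1 k.2.2 + (1 - ((k.1 : ℕ) : ℝ)) * (1 - q k.2.1 k.2.2))
  let c : 𝓦 × ℰ → ℝ := fun l => μoc 1 l.1 l.2 - μoc 0 l.1 l.2
  have hc : IntegrableOn (fun ω => c (L ω)) B P :=
    (Integrable.of_finite (f := c)).comp_measurable hL
  calc _ = 1 / P.real B *
        ∫ ω in B, (g (K ω) * (Y ω - condMean P Y (B ∩ K ⁻¹' {K ω})) + c (L ω)) ∂P := by
        rw [← integral_indicator hB]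
        congr 2
        ext ω
        by_cases hv : V ω = 1
        · simp [hv, B, g, c, K, L, hμoc, hcell]
          ring
        · simp [hv, B]
    _ = 1 / P.real B * ∑ l, c l * P.real (B ∩ L ⁻¹' {l}) := by
        rw [setIntegral_mul_sub_condMean_add hK hB hY.integrableOn hc g,
          setIntegral_comp_eq_sum hL hB c]
    _ = _ := by
        rw [mul_sum, Fintype.sum_prod_type]
        refine sum_congr rfl fun w _ => sum_congr rfl fun e _ => ?_
        rw [hslice]
        split_ifs with hpos
        · simp only [c, measureReal_def]
          ring
        · simp [measureReal_def, nonpos_iff_eq_zero.mp (not_lt.mp hpos)]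

/-- Population double robustness of the doubly robust functional with respect to the
propensity model (Section 5.3): for an arbitrary (possibly misspecified) propensity model
`q` with `0 < q(w,e) < 1` and the true outcome regression `μ_oc` among concurrent units,
`(1/𝒫(V=1)) · 𝔼[1{V=1} · ((2A−1)/(A·q(W,E)+(1−A)·(1−q(W,E))) · (Y − μ_oc(A,W,E))
  + μ_oc(1,W,E) − μ_oc(0,W,E))] = Σ_{(w,e) : 𝒫(W=w,E=e,V=1)>0} (μ_oc(1,w,e) − μ_oc(0,w,e)) · p(w,e|V=1)`. -/
theorem doubly_robust_wrt_propensity_model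
    {Ω : Type*} [MeasurableSpace Ω] (P : Measure Ω) [IsProbabilityMeasure P]
    {𝓦 ℰ : Type*} [Fintype 𝓦] [Fintype ℰ] [Nonempty 𝓦] [Nonempty ℰ]
    [MeasurableSpace 𝓦] [MeasurableSingletonClass 𝓦]
    [MeasurableSpace ℰ] [MeasurableSingletonClass ℰ]
    (W : Ω → 𝓦) (E : Ω → ℰ) (V : Ω → Fin 2) (A : Ω → Fin 2) (Y : Ω → ℝ)
    (hW : Measurable W) (hE : Measurable E) (hV : Measurable V) (hA : Measurable A)
    (hY : Integrable Y P)
    (hV1 : 0 < P {ω | V ω = 1})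
    -- positivity of both arms among concurrent units
    (hpos1 : ∀ (w : 𝓦) (e : ℰ), 0 < P {ω | W ω = w ∧ E ω = e ∧ V ω = 1} →
      0 < P {ω | A ω = 1 ∧ W ω = w ∧ E ω = e ∧ V ω = 1})
    (hpos0 : ∀ (w : 𝓦) (e : ℰ), 0 < P {ω | W ω = w ∧ E ω = e ∧ V ω = 1} →
      0 < P {ω | A ω = 0 ∧ W ω = w ∧ E ω = e ∧ V ω = 1})
    -- the true outcome regression among concurrent units
    (μoc : Fin 2 → 𝓦 → ℰ → ℝ)
    (hμoc : ∀ (a : Fin 2) (w : 𝓦) (e : ℰ), μoc a w e =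
      condMean P Y {ω | A ω = a ∧ W ω = w ∧ E ω = e ∧ V ω = 1})
    -- an arbitrary, possibly misspecified, propensity model bounded in (0,1)
    (q : 𝓦 → ℰ → ℝ) (hq : ∀ (w : 𝓦) (e : ℰ), 0 < q w e ∧ q w e < 1) :
    (1 / (P {ω | V ω = 1}).toReal) *
      ∫ ω, (if V ω = 1 then
          (2 * ((A ω : ℕ) : ℝ) - 1) /
              (((A ω : ℕ) : ℝ) * q (W ω) (E ω) +
                (1 - ((A ω : ℕ) : ℝ)) * (1 - q (W ω) (E ω))) *
              (Y ω - μoc (A ω) (W ω) (E ω)) +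
            μoc 1 (W ω) (E ω) - μoc 0 (W ω) (E ω)
        else 0) ∂P =
      ∑ w : 𝓦, ∑ e : ℰ,
        if 0 < P {ω | W ω = w ∧ E ω = e ∧ V ω = 1} then
          (μoc 1 w e - μoc 0 w e) *
            ((P {ω | W ω = w ∧ E ω = e ∧ V ω = 1}).toReal / (P {ω | V ω = 1}).toReal)
        else 0 :=
  doubly_robust_wrt_propensity_model_general P W E V A Y hW hE hV hA hY μoc hμoc q
end
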